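/- For μ > -1, let G_{j,μ}(f) = ∫₀¹ t^μ(1-t)^μ f(t mⱼ + (1-t) m*) dt, where mⱼ are the edge midpoints and m* = (v₁+v₂+v₃)/3 is the barycenter, and let φᵢ = λᵢ(1 - 3λ_{i+1} - 3λ_{i+2}). Then G_{j,μ}(φⱼ) = (σ_μ/2)·(-(3μ+4)/(3(2μ+3))) and G_{j,μ}(φᵢ) = (σ_μ/2)·(-(15μ+22)/(12(2μ+3))) for i ≠ j, where σ_μ = B(μ+1, μ+1). -/

import Mathlib

/-!
On the segment from `m*` to `mⱼ` the barycentric coordinates are affine in `t`: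
`λⱼ = (1 - t) / 3` and `λᵢ = (t + 2) / 6` for `i ≠ j`. Since `λᵢ₊₁ + λᵢ₊₂ = 1 - λᵢ`, we have
`φᵢ = λᵢ (3 λᵢ - 2)`, so `φⱼ = (t² - 1) / 3` and `φᵢ = (t² - 4) / 12` there. The functionals thus
reduce to `σ = B(μ+1, μ+1)` and the second moment `B(μ+3, μ+1)`, which two steps of the recurrence
`B(a+1, b) = a / (a+b) B(a, b)` turn into `(μ + 2) / (2 (2μ + 3)) σ`.
-/

open MeasureTheory

noncomputable def phiAF (lam : Fin 3 → ((Fin 2 → ℝ) →ᵃ[ℝ] ℝ)) (i : Fin 3)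
    (x : Fin 2 → ℝ) : ℝ :=
  lam i x * (1 - 3 * lam (i + 1) x - 3 * lam (i + 2) x)

/-- Edge midpoints of the triangle. -/
noncomputable def midpt (v : Fin 3 → (Fin 2 → ℝ)) (j : Fin 3) : Fin 2 → ℝ :=
  (v (j + 1) + v (j + 2)) / 2

/-- Barycenter of the triangle. -/
noncomputable def barycen (v : Fin 3 → (Fin 2 → ℝ)) : Fin 2 → ℝ :=
  (v 0 + v 1 + v 2) / 3

open ProbabilityTheory Set

theorem integral_rpow_mul_one_sub_rpow_eq_beta {p q : ℝ} (hp : -1 < p) (hq : -1 < q) :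
    ∫ t in (0:ℝ)..1, t ^ p * (1 - t) ^ q = beta (p + 1) (q + 1) := by
  have hcast : ((∫ t in (0:ℝ)..1, t ^ p * (1 - t) ^ q : ℝ) : ℂ)
      = Complex.betaIntegral (p + 1 : ℝ) (q + 1 : ℝ) := by
    rw [Complex.betaIntegral, ← intervalIntegral.integral_ofReal]
    refine intervalIntegral.integral_congr fun t ht => ?_
    rw [uIcc_of_le zero_le_one] at ht
    push_cast
    rw [Complex.ofReal_cpow ht.1, Complex.ofReal_cpow (sub_nonneg.mpr ht.2)]
    push_cast
    ring_nf
  rw [beta_eq_betaIntegralReal _ _ (by linarith) (by linarith), ← hcast, Complex.ofReal_re]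

theorem beta_add_one_left {a b : ℝ} (ha : 0 < a) (hb : 0 < b) :
    beta (a + 1) b = a / (a + b) * beta a b := by
  have hab : Real.Gamma (a + b) ≠ 0 := (Real.Gamma_pos_of_pos (add_pos ha hb)).ne'
  rw [beta, beta, add_right_comm, Real.Gamma_add_one ha.ne', Real.Gamma_add_one (add_pos ha hb).ne']
  field_simp

theorem intervalIntegrable_rpow_mul_one_sub_rpow {p q : ℝ} (hp : -1 < p) (hq : -1 < q) :
    IntervalIntegrable (fun t : ℝ => t ^ p * (1 - t) ^ q) volume 0 1 := by
  refine intervalIntegral.intervalIntegrable_of_integral_ne_zero ?_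
  rw [integral_rpow_mul_one_sub_rpow_eq_beta hp hq]
  exact (beta_pos (by linarith) (by linarith)).ne'

theorem integral_rpow_mul_one_sub_rpow_mul_sq {μ : ℝ} (hμ : -1 < μ) :
    ∫ t in (0:ℝ)..1, t ^ μ * (1 - t) ^ μ * t ^ 2
      = (μ + 2) / (2 * (2 * μ + 3)) * beta (μ + 1) (μ + 1) := by
  have hpow : ∀ t ∈ uIcc (0:ℝ) 1, t ^ μ * (1 - t) ^ μ * t ^ 2 = t ^ (μ + 2) * (1 - t) ^ μ := by
    intro t ht
    rw [uIcc_of_le zero_le_one] at ht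
    rw [show μ + 2 = μ + (2 : ℕ) by norm_num, Real.rpow_add_natCast' ht.1 (by norm_num; linarith)]
    ring
  rw [intervalIntegral.integral_congr hpow, integral_rpow_mul_one_sub_rpow_eq_beta (by linarith) hμ,
    show μ + 2 + 1 = μ + 1 + 1 + 1 by ring, beta_add_one_left (by linarith) (by linarith),
    beta_add_one_left (by linarith) (by linarith)]
  have : 2 * μ + 3 ≠ 0 := by linarith
  have : μ + 1 ≠ 0 := by linarith
  field_simp
  ring

theorem integral_rpow_mul_one_sub_rpow_mul_sq_sub_div {μ : ℝ} (hμ : -1 < μ) (a b : ℝ) :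
    ∫ t in (0:ℝ)..1, t ^ μ * (1 - t) ^ μ * ((t ^ 2 - a) / b)
      = ((μ + 2) / (2 * (2 * μ + 3)) - a) / b * beta (μ + 1) (μ + 1) := by
  have hw := intervalIntegrable_rpow_mul_one_sub_rpow hμ hμ
  have hw2 : IntervalIntegrable (fun t : ℝ => t ^ μ * (1 - t) ^ μ * t ^ 2) volume 0 1 :=
    hw.mul_continuousOn (continuous_pow 2).continuousOn
  simp_rw [mul_div_assoc', mul_sub, div_eq_inv_mul _ b]
  rw [intervalIntegral.integral_const_mul, intervalIntegral.integral_sub hw2 (hw.mul_const a),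
    intervalIntegral.integral_mul_const, integral_rpow_mul_one_sub_rpow_mul_sq hμ,
    integral_rpow_mul_one_sub_rpow_eq_beta hμ hμ]
  ring

theorem AffineMap.apply_smul_add_one_sub_smul {k V : Type*} [Ring k] [AddCommGroup V] [Module k V]
    (f : V →ᵃ[k] k) (t : k) (x y : V) : f (t • x + (1 - t) • y) = t * f x + (1 - t) * f y := by
  rw [add_comm, ← AffineMap.lineMap_apply_module, AffineMap.apply_lineMap,
    AffineMap.lineMap_apply_module, smul_eq_mul, smul_eq_mul, add_comm]

theorem AffineMap.apply_add_div_two {ι : Type*} (f : (ι → ℝ) →ᵃ[ℝ] ℝ) (x y : ι → ℝ) :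
    f ((x + y) / 2) = (f x + f y) / 2 := by
  have h : (x + y) / 2 = (1 / 2 : ℝ) • x + (1 - 1 / 2 : ℝ) • y := by
    ext i; simp only [Pi.div_apply, Pi.add_apply, Pi.smul_apply, Pi.ofNat_apply, smul_eq_mul]; ring
  rw [h, f.apply_smul_add_one_sub_smul]
  ring

theorem AffineMap.apply_add_add_div_three {ι : Type*} (f : (ι → ℝ) →ᵃ[ℝ] ℝ) (x y z : ι → ℝ) :
    f ((x + y + z) / 3) = (f x + f y + f z) / 3 := by
  have h : (x + y + z) / 3 = (2 / 3 : ℝ) • ((x + y) / 2) + (1 - 2 / 3 : ℝ) • z := by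
    ext i; simp only [Pi.div_apply, Pi.add_apply, Pi.smul_apply, Pi.ofNat_apply, smul_eq_mul]; ring
  rw [h, f.apply_smul_add_one_sub_smul, f.apply_add_div_two]
  ring

section Triangle

variable {v : Fin 3 → (Fin 2 → ℝ)} {lam : Fin 3 → ((Fin 2 → ℝ) →ᵃ[ℝ] ℝ)}

theorem phiAF_eq_of_sum_eq_one (hsum : ∀ x, lam 0 x + lam 1 x + lam 2 x = 1) (i : Fin 3)
    (x : Fin 2 → ℝ) : phiAF lam i x = lam i x * (3 * lam i x - 2) := by
  have h : lam (i + 1) x + lam (i + 2) x = 1 - lam i x := by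
    have := hsum x
    fin_cases i <;> simp <;> linarith
  rw [phiAF]
  linear_combination (-3 * lam i x) * h

variable (hdelta : ∀ i j, lam i (v j) = if i = j then 1 else 0)
include hdelta

theorem apply_midpt (i j : Fin 3) : lam i (midpt v j) = (1 - if i = j then 1 else 0) / 2 := by
  rw [midpt, AffineMap.apply_add_div_two, hdelta, hdelta]
  fin_cases i <;> fin_cases j <;> simp [Fin.ext_iff]

theorem apply_barycen (i : Fin 3) : lam i (barycen v) = 1 / 3 := by
  rw [barycen, AffineMap.apply_add_add_div_three, hdelta, hdelta, hdelta]
  fin_cases i <;> simp [Fin.ext_iff]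

theorem apply_segment_self (j : Fin 3) (t : ℝ) :
    lam j (t • midpt v j + (1 - t) • barycen v) = (1 - t) / 3 := by
  rw [AffineMap.apply_smul_add_one_sub_smul, apply_midpt hdelta, apply_barycen hdelta, if_pos rfl]
  ring

theorem apply_segment_of_ne {i j : Fin 3} (hij : i ≠ j) (t : ℝ) :
    lam i (t • midpt v j + (1 - t) • barycen v) = (t + 2) / 6 := by
  rw [AffineMap.apply_smul_add_one_sub_smul, apply_midpt hdelta, apply_barycen hdelta, if_neg hij]
  ring

end Triangle

theorem second_class_functionals_on_phi_general
    (v : Fin 3 → (Fin 2 → ℝ)) (lam : Fin 3 → ((Fin 2 → ℝ) →ᵃ[ℝ] ℝ))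
    (hdelta : ∀ i j, lam i (v j) = if i = j then 1 else 0)
    (hsum : ∀ x, lam 0 x + lam 1 x + lam 2 x = 1)
    (μ : ℝ) (hμ : -1 < μ)
    (σ : ℝ) (hσ : σ = ∫ u in (0:ℝ)..1, u ^ μ * (1 - u) ^ μ) :
    ∀ j : Fin 3,
      (∫ t in (0:ℝ)..1, t ^ μ * (1 - t) ^ μ *
          phiAF lam j (t • midpt v j + (1 - t) • barycen v))
        = σ / 2 * (-(3 * μ + 4) / (3 * (2 * μ + 3))) ∧
      ∀ i : Fin 3, i ≠ j →
        (∫ t in (0:ℝ)..1, t ^ μ * (1 - t) ^ μ *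
            phiAF lam i (t • midpt v j + (1 - t) • barycen v))
          = σ / 2 * (-(15 * μ + 22) / (12 * (2 * μ + 3))) := by
  intro j
  rw [hσ, integral_rpow_mul_one_sub_rpow_eq_beta hμ hμ]
  have h2μ3 : 2 * μ + 3 ≠ 0 := by linarith
  refine ⟨?_, fun i hij => ?_⟩
  · have hφ (t : ℝ) : phiAF lam j (t • midpt v j + (1 - t) • barycen v) = (t ^ 2 - 1) / 3 := by
      rw [phiAF_eq_of_sum_eq_one hsum, apply_segment_self hdelta]; ring
    simp_rw [hφ, integral_rpow_mul_one_sub_rpow_mul_sq_sub_div hμ]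
    rw [div_sub' (mul_ne_zero two_ne_zero h2μ3)]
    field_simp
    ring
  · have hφ (t : ℝ) : phiAF lam i (t • midpt v j + (1 - t) • barycen v) = (t ^ 2 - 4) / 12 := by
      rw [phiAF_eq_of_sum_eq_one hsum, apply_segment_of_ne hdelta hij]; ring
    simp_rw [hφ, integral_rpow_mul_one_sub_rpow_mul_sq_sub_div hμ]
    rw [div_sub' (mul_ne_zero two_ne_zero h2μ3)]
    field_simp
    ring

theorem second_class_functionals_on_phi
    (v : Fin 3 → (Fin 2 → ℝ)) (lam : Fin 3 → ((Fin 2 → ℝ) →ᵃ[ℝ] ℝ))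
    (hv : AffineIndependent ℝ v)
    (hdelta : ∀ i j, lam i (v j) = if i = j then 1 else 0)
    (hsum : ∀ x, lam 0 x + lam 1 x + lam 2 x = 1)
    (μ : ℝ) (hμ : -1 < μ)
    (σ : ℝ) (hσ : σ = ∫ u in (0:ℝ)..1, u ^ μ * (1 - u) ^ μ) :
    ∀ j : Fin 3,
      (∫ t in (0:ℝ)..1, t ^ μ * (1 - t) ^ μ *
          phiAF lam j (t • midpt v j + (1 - t) • barycen v))
        = σ / 2 * (-(3 * μ + 4) / (3 * (2 * μ + 3))) ∧
      ∀ i : Fin 3, i ≠ j →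
        (∫ t in (0:ℝ)..1, t ^ μ * (1 - t) ^ μ *
            phiAF lam i (t • midpt v j + (1 - t) • barycen v))
          = σ / 2 * (-(15 * μ + 22) / (12 * (2 * μ + 3))) :=
  second_class_functionals_on_phi_general v lam hdelta hsum μ hμ σ hσ
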